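/- arXiv:1006.0045 — 3 statements merged into one kernel-verified Lean document; each statement's English description precedes it below -/
import Mathlib

section
/- Let F be a distribution function on the reals with F(0) = 1/2, admitting a density f, and suppose ∫ |x|^δ f(x) dx < ∞ for some δ ∈ (0,1). Then for every γ ∈ (0,1) and every odd n = 2m+1 with n > 1 + 2γ/δ, the sample median Med_n of n i.i.d. observations from F satisfies E_F |Med_n|^γ < ∞. -/
/-!
By Markov's inequality for `|x|^δ`, each observation satisfies `P(|X_i| ≥ t) ≤ C t^(-δ)` with
`C = ∫ |x|^δ f(x) dx`. The median exceeds `t` in absolute value only if at least `m + 1` of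
the independent observations lie beyond `t` on the same side, so a union bound over
`(m+1)`-subsets gives `P(|Med_n| > t) = O(t^(-δ(m+1)))`. The condition `n > 1 + 2γ/δ` says `γ < δ m`, so the layer-cake
formula `E|Med_n|^γ = γ ∫₀^∞ t^(γ-1) P(|Med_n| > t) dt` is finite.
-/

open MeasureTheory ProbabilityTheory Finset
open scoped ENNReal

/-- The `k`-th order statistic (k ≥ 1) of the sample `X 0, …, X (n-1)`. -/
noncomputable def orderStat {Ω : Type*} {n : ℕ} (X : Fin n → Ω → ℝ) (k : ℕ) (ω : Ω) : ℝ :=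
  sInf {t : ℝ | k ≤ (Finset.univ.filter (fun i => X i ω ≤ t)).card}

section Counting

variable {ι : Type*} [Fintype ι]

theorem setOf_le_card_filter_eq_biUnion {α : Type*} (P : ι → α → Prop)
    [∀ i a, Decidable (P i a)] (k : ℕ) :
    {a | k ≤ #{i | P i a}} = ⋃ s ∈ powersetCard k univ, ⋂ i ∈ s, {a | P i a} := by
  ext a
  simp [le_card_iff_exists_subset_card, Finset.subset_iff, and_comm]

theorem isClosed_setOf_le_card_filter_le (x : ι → ℝ) (k : ℕ) :
    IsClosed {t : ℝ | k ≤ #{i | x i ≤ t}} := by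
  rw [setOf_le_card_filter_eq_biUnion (fun i t => x i ≤ t)]
  exact isClosed_biUnion_finset fun s _ => isClosed_biInter fun i _ => isClosed_Ici

theorem bddBelow_setOf_le_card_filter_le (x : ι → ℝ) {k : ℕ} (hk : 0 < k) :
    BddBelow {t : ℝ | k ≤ #{i | x i ≤ t}} := by
  obtain ⟨b, hb⟩ := (Set.finite_range x).bddBelow
  refine ⟨b, fun t ht => ?_⟩
  obtain ⟨i, hi⟩ := card_pos.1 (hk.trans_le ht)
  exact (hb ⟨i, rfl⟩).trans (mem_filter.1 hi).2

theorem nonempty_setOf_le_card_filter_le (x : ι → ℝ) {k : ℕ} (hk : k ≤ Fintype.card ι) :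
    {t : ℝ | k ≤ #{i | x i ≤ t}}.Nonempty := by
  obtain ⟨b, hb⟩ := (Set.finite_range x).bddAbove
  refine ⟨b, ?_⟩
  show k ≤ _
  rwa [filter_true_of_mem fun i _ => hb ⟨i, rfl⟩, card_univ]

end Counting

section OrderStatistic

variable {Ω : Type*} {n k : ℕ} (X : Fin n → Ω → ℝ)

theorem orderStat_le_iff (hk : 0 < k) (hkn : k ≤ n) (ω : Ω) (t : ℝ) :
    orderStat X k ω ≤ t ↔ k ≤ #{i | X i ω ≤ t} := by
  have hbdd := bddBelow_setOf_le_card_filter_le (X · ω) hk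
  have hmem : orderStat X k ω ∈ {s : ℝ | k ≤ #{i | X i ω ≤ s}} :=
    (isClosed_setOf_le_card_filter_le _ k).csInf_mem
      (nonempty_setOf_le_card_filter_le _ (by simpa using hkn)) hbdd
  refine ⟨fun h => hmem.trans (card_le_card ?_), fun h => csInf_le hbdd h⟩
  exact monotone_filter_right _ fun i _ hi => hi.trans h

theorem lt_orderStat_iff (hk : 0 < k) (hkn : k ≤ n) (ω : Ω) (t : ℝ) :
    t < orderStat X k ω ↔ n - k < #{i | t < X i ω} := by
  rw [← not_le, orderStat_le_iff X hk hkn, not_le]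
  have hsplit := card_filter_add_card_filter_not (s := univ) (fun i => X i ω ≤ t)
  simp only [not_le, card_univ, Fintype.card_fin] at hsplit
  omega

theorem measurable_orderStat [MeasurableSpace Ω] (hX : ∀ i, Measurable (X i))
    (hk : 0 < k) (hkn : k ≤ n) : Measurable (orderStat X k) := by
  refine measurable_of_Iic fun t => ?_
  have hpre : orderStat X k ⁻¹' Set.Iic t = {ω | k ≤ #{i | X i ω ≤ t}} := by
    ext ω
    exact orderStat_le_iff X hk hkn ω t
  rw [hpre, setOf_le_card_filter_eq_biUnion (fun i ω => X i ω ≤ t)]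
  exact Finset.measurableSet_biUnion _ fun s _ =>
    Finset.measurableSet_biInter _ fun i _ => hX i measurableSet_Iic

end OrderStatistic

theorem measure_le_card_filter_le {Ω ι β : Type*} [MeasurableSpace Ω] [MeasurableSpace β]
    [Fintype ι] {μ : Measure Ω} {X : ι → Ω → β} (hindep : iIndepFun X μ)
    (p : β → Prop) [DecidablePred p] (hp : MeasurableSet {x | p x}) (k : ℕ) {q : ℝ≥0∞}
    (hq : ∀ i, μ {ω | p (X i ω)} ≤ q) :
    μ {ω | k ≤ #{i | p (X i ω)}} ≤ (Fintype.card ι).choose k * q ^ k := by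
  rw [setOf_le_card_filter_eq_biUnion (fun i ω => p (X i ω))]
  calc _ ≤ ∑ s ∈ powersetCard k univ, μ (⋂ i ∈ s, {ω | p (X i ω)}) :=
        measure_biUnion_finset_le _ _
    _ ≤ ∑ s ∈ powersetCard k (univ : Finset ι), q ^ k := by
        refine sum_le_sum fun s hs => ?_
        calc μ (⋂ i ∈ s, {ω | p (X i ω)}) = ∏ i ∈ s, μ {ω | p (X i ω)} :=
              hindep.measure_inter_preimage_eq_mul s (sets := fun _ => {x | p x}) fun _ _ => hp
          _ ≤ ∏ _i ∈ s, q := prod_le_prod' fun i _ => hq i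
          _ = q ^ k := by rw [prod_const, (mem_powersetCard.1 hs).2]
    _ = (Fintype.card ι).choose k * q ^ k := by
        rw [sum_const, card_powersetCard, card_univ, nsmul_eq_mul]

theorem measure_lt_abs_median_le {Ω : Type*} [MeasurableSpace Ω] {μ : Measure Ω} {m : ℕ}
    {X : Fin (2 * m + 1) → Ω → ℝ} (hindep : iIndepFun X μ) {t : ℝ} {q : ℝ≥0∞}
    (hright : ∀ i, μ {ω | t < X i ω} ≤ q) (hleft : ∀ i, μ {ω | X i ω ≤ -t} ≤ q) :
    μ {ω | t < |orderStat X (m + 1) ω|} ≤ 2 * (2 * m + 1).choose (m + 1) * q ^ (m + 1) := by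
  have hsub : {ω | t < |orderStat X (m + 1) ω|} ⊆
      {ω | m + 1 ≤ #{i | t < X i ω}} ∪ {ω | m + 1 ≤ #{i | X i ω ≤ -t}} := by
    intro ω hω
    rcases lt_abs.1 (show t < |_| from hω) with hpos | hneg
    · left
      have := (lt_orderStat_iff X m.succ_pos (by omega) ω t).1 hpos
      show m + 1 ≤ _
      omega
    · exact Or.inr ((orderStat_le_iff X m.succ_pos (by omega) ω (-t)).1 (by linarith))
  have hbound := fun (p : ℝ → Prop) [DecidablePred p] (hp : MeasurableSet {x | p x}) =>
    measure_le_card_filter_le hindep p hp (m + 1) (q := q)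
  calc _ ≤ _ := measure_mono hsub
    _ ≤ _ := measure_union_le _ _
    _ ≤ _ := add_le_add (hbound (t < ·) measurableSet_Ioi hright)
        (hbound (· ≤ -t) measurableSet_Iic hleft)
    _ = _ := by simp only [Fintype.card_fin]; ring

theorem withDensity_le_rpow_neg_mul_lintegral {ν : Measure ℝ} (f : ℝ → ℝ) {δ t : ℝ}
    (hδ : 0 ≤ δ) (ht : 0 < t) {A : Set ℝ} (hA : MeasurableSet A) (hAt : ∀ x ∈ A, t ≤ |x|) :
    ν.withDensity (fun x => ENNReal.ofReal (f x)) A ≤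
      ENNReal.ofReal (t ^ (-δ)) * ∫⁻ x, ENNReal.ofReal (|x| ^ δ * f x) ∂ν := by
  rw [withDensity_apply _ hA]
  calc ∫⁻ x in A, ENNReal.ofReal (f x) ∂ν
      ≤ ∫⁻ x in A, ENNReal.ofReal (t ^ (-δ)) * ENNReal.ofReal (|x| ^ δ * f x) ∂ν := by
        refine setLIntegral_mono' hA fun x hx => ?_
        have hone : 1 ≤ t ^ (-δ) * |x| ^ δ := by
          rw [Real.rpow_neg ht.le, ← div_eq_inv_mul, ← Real.div_rpow (abs_nonneg x) ht.le]
          exact Real.one_le_rpow ((one_le_div ht).2 (hAt x hx)) hδ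
        rw [← ENNReal.ofReal_mul (by positivity), ← mul_assoc,
          ENNReal.ofReal_mul (by positivity)]
        exact le_mul_of_one_le_left' (ENNReal.one_le_ofReal.2 hone)
    _ = ENNReal.ofReal (t ^ (-δ)) * ∫⁻ x in A, ENNReal.ofReal (|x| ^ δ * f x) ∂ν :=
        lintegral_const_mul' _ _ ENNReal.ofReal_ne_top
    _ ≤ _ := by gcongr; exact Measure.restrict_le_self

theorem lintegral_rpow_abs_lt_top_of_tail_le {Ω : Type*} [MeasurableSpace Ω] {μ : Measure Ω}
    [IsFiniteMeasure μ] {Y : Ω → ℝ} (hY : AEMeasurable Y μ) {γ p : ℝ} {D : ℝ≥0∞}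
    (hγ : 0 < γ) (hγp : γ < p) (hD : D ≠ ∞)
    (htail : ∀ t, 1 < t → μ {ω | t < |Y ω|} ≤ D * ENNReal.ofReal (t ^ (-p))) :
    ∫⁻ ω, ENNReal.ofReal (|Y ω| ^ γ) ∂μ < ∞ := by
  rw [lintegral_rpow_eq_lintegral_meas_lt_mul μ (ae_of_all _ fun _ => abs_nonneg _) hY.abs hγ,
    ← Set.Ioc_union_Ioi_eq_Ioi zero_le_one,
    lintegral_union measurableSet_Ioi (Set.Ioc_disjoint_Ioi le_rfl)]
  refine ENNReal.mul_lt_top ENNReal.ofReal_lt_top (ENNReal.add_lt_top.2 ⟨?_, ?_⟩)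
  · have hint : IntegrableOn (fun t : ℝ => t ^ (γ - 1)) (Set.Ioc 0 1) :=
      (intervalIntegral.intervalIntegrable_rpow' (by linarith)).1
    calc _ ≤ ∫⁻ t in Set.Ioc (0 : ℝ) 1, μ Set.univ * ENNReal.ofReal (t ^ (γ - 1)) :=
          lintegral_mono fun t => by gcongr; exact Set.subset_univ _
      _ < ∞ := by
          rw [lintegral_const_mul' _ _ (measure_ne_top _ _)]
          exact ENNReal.mul_lt_top (measure_lt_top _ _) hint.lintegral_lt_top
  · have hint : IntegrableOn (fun t : ℝ => t ^ (γ - 1 - p)) (Set.Ioi 1) :=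
      integrableOn_Ioi_rpow_of_lt (by linarith) one_pos
    calc _ ≤ ∫⁻ t in Set.Ioi (1 : ℝ), D * ENNReal.ofReal (t ^ (γ - 1 - p)) := by
          refine setLIntegral_mono' measurableSet_Ioi fun t ht => ?_
          have ht0 : 0 < t := one_pos.trans ht
          calc _ ≤ D * ENNReal.ofReal (t ^ (-p)) * ENNReal.ofReal (t ^ (γ - 1)) := by
                gcongr; exact htail t ht
            _ = D * ENNReal.ofReal (t ^ (γ - 1 - p)) := by
                rw [mul_assoc, ← ENNReal.ofReal_mul (by positivity), ← Real.rpow_add ht0]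
                ring_nf
      _ < ∞ := by
          rw [lintegral_const_mul' _ _ hD]
          exact ENNReal.mul_lt_top hD.lt_top hint.lintegral_lt_top

theorem stmt2_general {Ω : Type*} [MeasurableSpace Ω] (μ : Measure Ω) [IsProbabilityMeasure μ]
    (m : ℕ) (X : Fin (2 * m + 1) → Ω → ℝ) (hmeas : ∀ i, Measurable (X i))
    (hindep : iIndepFun X μ)
    (f : ℝ → ℝ)
    (hdens : ∀ i, Measure.map (X i) μ = volume.withDensity (fun x => ENNReal.ofReal (f x)))
    (δ : ℝ) (hδ : δ ∈ Set.Ioo (0 : ℝ) 1)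
    (hmom : ∫⁻ x, ENNReal.ofReal (|x| ^ δ * f x) < ⊤)
    (γ : ℝ) (hγ : γ ∈ Set.Ioo (0 : ℝ) 1)
    (hn : (1 : ℝ) + 2 * γ / δ < (2 * m + 1 : ℕ)) :
    ∫⁻ ω, ENNReal.ofReal (|orderStat X (m + 1) ω| ^ γ) ∂μ < ⊤ := by
  obtain ⟨hδ0, -⟩ := hδ
  set C := ∫⁻ x, ENNReal.ofReal (|x| ^ δ * f x)
  have htail : ∀ i {A : Set ℝ} {t : ℝ}, MeasurableSet A → 0 < t → (∀ x ∈ A, t ≤ |x|) →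
      μ (X i ⁻¹' A) ≤ ENNReal.ofReal (t ^ (-δ)) * C := by
    intro i A t hA ht hAt
    rw [← Measure.map_apply (hmeas i) hA, hdens i]
    exact withDensity_le_rpow_neg_mul_lintegral f hδ0.le ht hA hAt
  have hγp : γ < δ * (m + 1) := by
    push_cast at hn
    rw [mul_div_assoc] at hn
    have := (div_lt_iff₀ hδ0).1 (by linarith : γ / δ < m)
    nlinarith
  refine lintegral_rpow_abs_lt_top_of_tail_le (measurable_orderStat X hmeas m.succ_pos
    (by omega)).aemeasurable hγ.1 hγp (D := 2 * (2 * m + 1).choose (m + 1) * C ^ (m + 1))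
    (by finiteness [hmom.ne]) fun t ht => ?_
  have ht0 : 0 < t := one_pos.trans ht
  calc _ ≤ 2 * (2 * m + 1).choose (m + 1) * (ENNReal.ofReal (t ^ (-δ)) * C) ^ (m + 1) :=
        measure_lt_abs_median_le hindep
          (fun i => htail i measurableSet_Ioi ht0 fun x (hx : t < x) =>
            hx.le.trans (le_abs_self x))
          (fun i => htail i measurableSet_Iic ht0 fun x (hx : x ≤ -t) =>
            (le_neg.1 hx).trans (neg_le_abs x))
    _ = _ := by
        rw [mul_pow, ← ENNReal.ofReal_pow (by positivity), ← Real.rpow_natCast,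
          ← Real.rpow_mul ht0.le]
        push_cast
        ring_nf

/-- Finiteness of `E_F |Med_n|^γ` for odd `n = 2m+1 > 1 + 2γ/δ`, under the moment
condition `∫ |x|^δ f(x) dx < ∞` and `F(0) = 1/2`. -/
theorem stmt2 {Ω : Type*} [MeasurableSpace Ω] (μ : Measure Ω) [IsProbabilityMeasure μ]
    (m : ℕ) (X : Fin (2 * m + 1) → Ω → ℝ) (hmeas : ∀ i, Measurable (X i))
    (hindep : iIndepFun X μ)
    (f : ℝ → ℝ) (hf : ∀ x, 0 ≤ f x) (hfmeas : Measurable f)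
    (hdens : ∀ i, Measure.map (X i) μ = volume.withDensity (fun x => ENNReal.ofReal (f x)))
    (F : ℝ → ℝ) (hF : ∀ t, F t = (μ {ω | X 0 ω ≤ t}).toReal) (hF0 : F 0 = 1 / 2)
    (δ : ℝ) (hδ : δ ∈ Set.Ioo (0 : ℝ) 1)
    (hmom : ∫⁻ x, ENNReal.ofReal (|x| ^ δ * f x) < ⊤)
    (γ : ℝ) (hγ : γ ∈ Set.Ioo (0 : ℝ) 1)
    (hn : (1 : ℝ) + 2 * γ / δ < (2 * m + 1 : ℕ)) :
    ∫⁻ ω, ENNReal.ofReal (|orderStat X (m + 1) ω| ^ γ) ∂μ < ⊤ :=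
  stmt2_general μ m X hmeas hindep f hdens δ hδ hmom γ hγ hn
end

section
/- Let F be a distribution function on the reals with ∫ |x|^δ dF(x) < ∞ for some δ ∈ (0,1). Then g_δ(t) := |t|^δ F(t)(1-F(t)) is bounded, g_δ(t) → 0 as |t| → ∞, and ∫ [F(t)(1-F(t))]^b dt < ∞ for every b ≥ 1/δ. -/
/-!
Let `μ` be the law of `F`. According to the sign of `t`, one of the factors `F t = μ (Iic t)`,
`1 - F t = μ (Ioi t)` is at most `T(|t|)`, where `T(s) = μ {x | s ≤ |x|}`, and the other is at
most `1`. Markov's inequality on `{x | s ≤ |x|}` bounds `s ^ δ * T(s)` by the `δ`-moment of `μ`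
over that set, which tends to `0`. For the integral, `b ≥ 1/δ` reduces to `b = 1/δ`, and
`T ^ (1/δ) = (s ^ δ * T) ^ (1/δ - 1) * T * s ^ (δ - 1) ≤ K ^ (1/δ - 1) * T * s ^ (δ - 1)`
with `K = ∫ |x| ^ δ dμ`; by the layer-cake formula `∫₀^∞ T(s) s ^ (δ - 1) ds = δ⁻¹ ∫ |x| ^ δ dμ < ∞`.
-/

open MeasureTheory Filter Set Topology
open scoped ENNReal

theorem lintegral_comp_abs (f : ℝ → ℝ≥0∞) :
    ∫⁻ x, f |x| = 2 * ∫⁻ x in Ioi 0, f x := by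
  have hIoi : ∫⁻ x in Ioi 0, f |x| = ∫⁻ x in Ioi 0, f x :=
    setLIntegral_congr_fun measurableSet_Ioi fun x hx => by rw [abs_of_pos hx]
  have hIic : ∫⁻ x in Iic 0, f |x| = ∫⁻ x in Ioi 0, f |x| := by
    rw [← (Measure.measurePreserving_neg volume).setLIntegral_comp_preimage_emb
      (Homeomorph.neg ℝ).measurableEmbedding, neg_preimage, neg_Iic, neg_zero]
    simp_rw [abs_neg]
    exact setLIntegral_congr Ioi_ae_eq_Ici.symm
  rw [← lintegral_add_compl _ measurableSet_Iic, compl_Iic, hIic, hIoi, two_mul]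

theorem Real.rpow_one_div_le_of_rpow_mul_le {T s K δ : ℝ} (hT : 0 ≤ T) (hs : 0 < s)
    (hδ0 : 0 < δ) (hδ1 : δ ≤ 1) (hK : s ^ δ * T ≤ K) :
    T ^ (1 / δ) ≤ K ^ (1 / δ - 1) * (T * s ^ (δ - 1)) := by
  have hexp : 0 ≤ 1 / δ - 1 := sub_nonneg.2 (one_le_one_div hδ0 hδ1)
  calc T ^ (1 / δ) = (s ^ δ * T) ^ (1 / δ - 1) * (T * s ^ (δ - 1)) := by
        have hs' : s ^ (δ * (1 / δ - 1)) * s ^ (δ - 1) = 1 := by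
          rw [← Real.rpow_add hs, show δ * (1 / δ - 1) + (δ - 1) = 0 by field_simp; ring,
            Real.rpow_zero]
        have hT' : T ^ (1 / δ - 1) * T = T ^ (1 / δ) := by
          conv_rhs => rw [← sub_add_cancel (1 / δ) 1]
          rw [Real.rpow_add' hT (by simp [hδ0.ne']), Real.rpow_one]
        rw [Real.mul_rpow (by positivity) hT, ← Real.rpow_mul hs.le]
        linear_combination (-(T ^ (1 / δ - 1) * T)) * hs' - hT'
    _ ≤ K ^ (1 / δ - 1) * (T * s ^ (δ - 1)) := by gcongr

section Moment

variable {μ : Measure ℝ} {δ : ℝ}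

theorem ofReal_rpow_mul_measure_abs_ge_le (hδ : 0 ≤ δ) {s : ℝ} (hs : 0 ≤ s) :
    ENNReal.ofReal (s ^ δ) * μ {x | s ≤ |x|} ≤
      ∫⁻ x in {x | s ≤ |x|}, ENNReal.ofReal (|x| ^ δ) ∂μ := by
  rw [← setLIntegral_const]
  exact setLIntegral_mono (by fun_prop) fun x hx =>
    ENNReal.ofReal_le_ofReal (Real.rpow_le_rpow hs hx hδ)

theorem rpow_mul_measureReal_abs_ge_le (hδ : 0 ≤ δ)
    (hmom : ∫⁻ x, ENNReal.ofReal (|x| ^ δ) ∂μ < ⊤) {s : ℝ} (hs : 0 ≤ s) :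
    s ^ δ * μ.real {x | s ≤ |x|} ≤
      (∫⁻ x in {x | s ≤ |x|}, ENNReal.ofReal (|x| ^ δ) ∂μ).toReal := by
  have h := ENNReal.toReal_mono ((setLIntegral_le_lintegral _ _).trans_lt hmom).ne
    (ofReal_rpow_mul_measure_abs_ge_le (μ := μ) hδ hs)
  rwa [ENNReal.toReal_mul, ENNReal.toReal_ofReal (Real.rpow_nonneg hs δ)] at h

theorem tendsto_setLIntegral_abs_ge_atTop (hmom : ∫⁻ x, ENNReal.ofReal (|x| ^ δ) ∂μ < ⊤) :
    Tendsto (fun s => ∫⁻ x in {x | s ≤ |x|}, ENNReal.ofReal (|x| ^ δ) ∂μ) atTop (𝓝 0) := by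
  set ν := μ.withDensity fun x => ENNReal.ofReal (|x| ^ δ)
  have hsets : ∀ s : ℝ, MeasurableSet {x : ℝ | s ≤ |x|} :=
    fun s => measurableSet_le measurable_const measurable_abs
  have hempty : ⋂ s : ℝ, {x : ℝ | s ≤ |x|} = ∅ :=
    eq_empty_of_forall_notMem fun x hx => by
      have := mem_iInter.1 hx (|x| + 1)
      norm_num at this
  have h := tendsto_measure_iInter_atTop (μ := ν) (fun s => (hsets s).nullMeasurableSet)
    (fun s t hst x hx => le_trans hst hx) ⟨0, ?_⟩
  · simp_rw [hempty, measure_empty, Function.comp_def, ν, withDensity_apply _ (hsets _)] at h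
    exact h
  · rw [withDensity_apply _ (hsets 0)]
    exact ((setLIntegral_le_lintegral _ _).trans_lt hmom).ne

theorem setLIntegral_measure_abs_ge_mul_rpow_lt_top (hδ : 0 < δ)
    (hmom : ∫⁻ x, ENNReal.ofReal (|x| ^ δ) ∂μ < ⊤) :
    ∫⁻ s in Ioi 0, μ {x | s ≤ |x|} * ENNReal.ofReal (s ^ (δ - 1)) < ⊤ := by
  rw [lintegral_rpow_eq_lintegral_meas_le_mul μ (ae_of_all _ abs_nonneg)
    measurable_abs.aemeasurable hδ] at hmom
  exact ENNReal.lt_top_of_mul_ne_top_right hmom.ne (by simpa using hδ)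

theorem lintegral_measureReal_abs_ge_rpow_one_div_lt_top [IsFiniteMeasure μ] (hδ0 : 0 < δ)
    (hδ1 : δ ≤ 1) (hmom : ∫⁻ x, ENNReal.ofReal (|x| ^ δ) ∂μ < ⊤) :
    ∫⁻ t, ENNReal.ofReal (μ.real {x | |t| ≤ |x|} ^ (1 / δ)) < ⊤ := by
  set K := (∫⁻ x, ENNReal.ofReal (|x| ^ δ) ∂μ).toReal
  have hbound : ∀ s ∈ Ioi (0 : ℝ), ENNReal.ofReal (μ.real {x | s ≤ |x|} ^ (1 / δ)) ≤
      ENNReal.ofReal (K ^ (1 / δ - 1)) * (μ {x | s ≤ |x|} * ENNReal.ofReal (s ^ (δ - 1))) := by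
    intro s hs
    have hK : s ^ δ * μ.real {x | s ≤ |x|} ≤ K :=
      (rpow_mul_measureReal_abs_ge_le hδ0.le hmom (le_of_lt hs)).trans
        (ENNReal.toReal_mono hmom.ne (setLIntegral_le_lintegral _ _))
    rw [← ofReal_measureReal, ← ENNReal.ofReal_mul measureReal_nonneg,
      ← ENNReal.ofReal_mul (by positivity)]
    exact ENNReal.ofReal_le_ofReal
      (Real.rpow_one_div_le_of_rpow_mul_le measureReal_nonneg hs hδ0 hδ1 hK)
  calc ∫⁻ t, ENNReal.ofReal (μ.real {x | |t| ≤ |x|} ^ (1 / δ))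
      = 2 * ∫⁻ s in Ioi 0, ENNReal.ofReal (μ.real {x | s ≤ |x|} ^ (1 / δ)) :=
        lintegral_comp_abs fun s => ENNReal.ofReal (μ.real {x | s ≤ |x|} ^ (1 / δ))
    _ ≤ 2 * (ENNReal.ofReal (K ^ (1 / δ - 1)) *
          ∫⁻ s in Ioi 0, μ {x | s ≤ |x|} * ENNReal.ofReal (s ^ (δ - 1))) := by
        rw [← lintegral_const_mul' _ _ ENNReal.ofReal_ne_top]
        gcongr 1
        exact setLIntegral_mono' measurableSet_Ioi hbound
    _ < ⊤ := by
        have := setLIntegral_measure_abs_ge_mul_rpow_lt_top hδ0 hmom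
        finiteness

end Moment

namespace StieltjesFunction

theorem mem_Icc_zero_one (F : StieltjesFunction ℝ) (hbot : Tendsto F atBot (𝓝 0))
    (htop : Tendsto F atTop (𝓝 1)) (t : ℝ) : F t ∈ Icc 0 1 :=
  ⟨F.mono.le_of_tendsto hbot t, F.mono.ge_of_tendsto htop t⟩

theorem mul_one_sub_le_measureReal_abs_ge (F : StieltjesFunction ℝ)
    (hbot : Tendsto F atBot (𝓝 0)) (htop : Tendsto F atTop (𝓝 1)) (t : ℝ) :
    F t * (1 - F t) ≤ F.measure.real {x | |t| ≤ |x|} := by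
  have := F.isProbabilityMeasure hbot htop
  obtain ⟨hF0, hF1⟩ := F.mem_Icc_zero_one hbot htop t
  rcases le_or_gt 0 t with ht | ht
  · calc F t * (1 - F t) ≤ 1 - F t := mul_le_of_le_one_left (sub_nonneg.2 hF1) hF1
      _ = F.measure.real (Ioi t) := by
          rw [measureReal_def, F.measure_Ioi htop, ENNReal.toReal_ofReal (sub_nonneg.2 hF1)]
      _ ≤ _ := measureReal_mono fun x (hx : t < x) => show |t| ≤ |x| by
          rw [abs_of_nonneg ht]; exact hx.le.trans (le_abs_self x)
  · calc F t * (1 - F t) ≤ F t := mul_le_of_le_one_right hF0 (by linarith)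
      _ = F.measure.real (Iic t) := by
          rw [measureReal_def, F.measure_Iic hbot, sub_zero, ENNReal.toReal_ofReal hF0]
      _ ≤ _ := measureReal_mono fun x (hx : x ≤ t) => show |t| ≤ |x| by
          rw [abs_of_neg ht]; exact (neg_le_neg hx).trans (neg_le_abs x)

end StieltjesFunction

/-- For a distribution function `F` with `∫ |x|^δ dF(x) < ∞` (δ ∈ (0,1)):
`g_δ(t) = |t|^δ F(t)(1-F(t))` is bounded and tends to `0` as `|t| → ∞`,
and `∫ [F(t)(1-F(t))]^b dt < ∞` for every `b ≥ 1/δ`. -/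
theorem stmt3 (F : StieltjesFunction ℝ)
    (hbot : Tendsto F atBot (nhds (0 : ℝ))) (htop : Tendsto F atTop (nhds (1 : ℝ)))
    (δ : ℝ) (hδ : δ ∈ Set.Ioo (0 : ℝ) 1)
    (hmom : ∫⁻ x, ENNReal.ofReal (|x| ^ δ) ∂F.measure < ⊤) :
    (∃ C : ℝ, ∀ t : ℝ, |t| ^ δ * F t * (1 - F t) ≤ C) ∧
    Tendsto (fun t : ℝ => |t| ^ δ * F t * (1 - F t)) atTop (nhds 0) ∧
    Tendsto (fun t : ℝ => |t| ^ δ * F t * (1 - F t)) atBot (nhds 0) ∧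
    ∀ b : ℝ, 1 / δ ≤ b → ∫⁻ t, ENNReal.ofReal ((F t * (1 - F t)) ^ b) < ⊤ := by
  obtain ⟨hδ0, hδ1⟩ := hδ
  have := F.isProbabilityMeasure hbot htop
  have hF : ∀ t, 0 ≤ F t * (1 - F t) ∧ F t * (1 - F t) ≤ 1 := fun t => by
    obtain ⟨hF0, hF1⟩ := F.mem_Icc_zero_one hbot htop t
    constructor <;> nlinarith
  set tail := fun s : ℝ => (∫⁻ x in {x | s ≤ |x|}, ENNReal.ofReal (|x| ^ δ) ∂F.measure).toReal
  have hg_nonneg : ∀ t, 0 ≤ |t| ^ δ * F t * (1 - F t) := fun t => by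
    rw [mul_assoc]; exact mul_nonneg (by positivity) (hF t).1
  have hg_le : ∀ t, |t| ^ δ * F t * (1 - F t) ≤ tail |t| := fun t =>
    calc |t| ^ δ * F t * (1 - F t) = |t| ^ δ * (F t * (1 - F t)) := mul_assoc ..
      _ ≤ |t| ^ δ * F.measure.real {x | |t| ≤ |x|} := by
          gcongr; exact F.mul_one_sub_le_measureReal_abs_ge hbot htop t
      _ ≤ tail |t| := rpow_mul_measureReal_abs_ge_le hδ0.le hmom (abs_nonneg t)
  have htail : Tendsto tail atTop (𝓝 0) :=
    (ENNReal.tendsto_toReal ENNReal.zero_ne_top).comp (tendsto_setLIntegral_abs_ge_atTop hmom)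
  refine ⟨⟨(∫⁻ x, ENNReal.ofReal (|x| ^ δ) ∂F.measure).toReal, fun t => (hg_le t).trans
      (ENNReal.toReal_mono hmom.ne (setLIntegral_le_lintegral _ _))⟩,
    squeeze_zero hg_nonneg hg_le (htail.comp tendsto_abs_atTop_atTop),
    squeeze_zero hg_nonneg hg_le (htail.comp tendsto_abs_atBot_atTop), fun b hb => ?_⟩
  calc ∫⁻ t, ENNReal.ofReal ((F t * (1 - F t)) ^ b)
      ≤ ∫⁻ t, ENNReal.ofReal (F.measure.real {x | |t| ≤ |x|} ^ (1 / δ)) := by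
        refine lintegral_mono fun t => ENNReal.ofReal_le_ofReal ?_
        calc (F t * (1 - F t)) ^ b ≤ (F t * (1 - F t)) ^ (1 / δ) :=
              Real.rpow_le_rpow_of_exponent_ge' (hF t).1 (hF t).2 (by positivity) hb
          _ ≤ _ := by gcongr; exacts [(hF t).1, F.mul_one_sub_le_measureReal_abs_ge hbot htop t]
    _ < ⊤ := lintegral_measureReal_abs_ge_rpow_one_div_lt_top hδ0 hδ1.le hmom
end

section
/- Hoeffding's inequality (relative entropy form): if ξ_1,...,ξ_n are i.i.d. random variables with values in [0,1], mean μ = E[ξ_1], and 0 < ε < 1-μ, then P(n^{-1} Σ ξ_i - μ ≥ ε) ≤ [ (μ/(μ+ε))^{μ+ε} ((1-μ)/(1-μ-ε))^{1-μ-ε} ]^n. -/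
/-!
Chernoff's method: for `t ≥ 0`, Markov's inequality applied to `exp (t S)` and independence give
`P(S ≥ n a) ≤ (exp (-t a) E[exp (t ξ)])ⁿ`. Convexity of `exp` bounds `exp (t x)` on `[0, 1]` by the
chord `1 - x + x eᵗ`, so `E[exp (t ξ)] ≤ 1 - m + m eᵗ`, the mgf of a Bernoulli(`m`) variable.
Minimising `exp (-t a) (1 - m + m eᵗ)` over `t`, at `eᵗ = a (1 - m) / (m (1 - a))`, gives the
relative-entropy bound. When `m = 0` every `ξ i` vanishes almost surely and both sides are `0`.
-/

open MeasureTheory ProbabilityTheory Real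

lemma exp_mul_le_one_sub_add_mul_exp {x : ℝ} (hx : x ∈ Set.Icc (0 : ℝ) 1) (t : ℝ) :
    exp (t * x) ≤ 1 - x + x * exp t := by
  have h := convexOn_exp.2 (Set.mem_univ 0) (Set.mem_univ t) (sub_nonneg.2 hx.2) hx.1
    (sub_add_cancel 1 x)
  simp only [smul_eq_mul, mul_zero, zero_add, exp_zero, mul_one] at h
  rwa [mul_comm]

lemma rpow_neg_mul_one_sub_add_mul_eq {m a : ℝ} (hm : 0 < m) (hma : m < a) (ha : a < 1) :
    (a * (1 - m) / (m * (1 - a))) ^ (-a) * (1 - m + m * (a * (1 - m) / (m * (1 - a))))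
      = (m / a) ^ a * ((1 - m) / (1 - a)) ^ (1 - a) := by
  have ha₀ : 0 < a := hm.trans hma
  have hc : 0 < (1 - m) / (1 - a) := div_pos (by linarith) (by linarith)
  have h1a : 1 - a ≠ 0 := by linarith
  have hR : a * (1 - m) / (m * (1 - a)) = (m / a)⁻¹ * ((1 - m) / (1 - a)) := by
    field_simp
  have hB : 1 - m + m * (a * (1 - m) / (m * (1 - a))) = (1 - m) / (1 - a) := by
    field_simp
    ring
  rw [hB, hR, mul_rpow (inv_nonneg.2 (div_pos hm ha₀).le) hc.le,
    inv_rpow (div_pos hm ha₀).le, rpow_neg (div_pos hm ha₀).le, inv_inv, mul_assoc,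
    ← rpow_add_one hc.ne', neg_add_eq_sub]

section

variable {Ω : Type*} [MeasurableSpace Ω] {μ : Measure Ω}

lemma integrable_of_ae_mem_Icc [IsFiniteMeasure μ] {X : Ω → ℝ} (hX : AEMeasurable X μ)
    (hbd : ∀ᵐ ω ∂μ, X ω ∈ Set.Icc (0 : ℝ) 1) : Integrable X μ := by
  refine .of_bound hX.aestronglyMeasurable 1 ?_
  filter_upwards [hbd] with ω hω
  rw [Real.norm_eq_abs, abs_le]
  constructor <;> linarith [hω.1, hω.2]

lemma integrable_exp_mul_of_ae_mem_Icc [IsFiniteMeasure μ] {X : Ω → ℝ} (hX : AEMeasurable X μ)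
    (hbd : ∀ᵐ ω ∂μ, X ω ∈ Set.Icc (0 : ℝ) 1) (t : ℝ) :
    Integrable (fun ω => exp (t * X ω)) μ := by
  refine .of_bound (hX.const_mul t).exp.aestronglyMeasurable (exp |t|) ?_
  filter_upwards [hbd] with ω hω
  rw [Real.norm_eq_abs, abs_of_pos (exp_pos _), exp_le_exp]
  calc t * X ω ≤ |t * X ω| := le_abs_self _
    _ = |t| * X ω := by rw [abs_mul, abs_of_nonneg hω.1]
    _ ≤ |t| := mul_le_of_le_one_right (abs_nonneg t) hω.2

lemma mgf_le_one_sub_add_mul_exp [IsProbabilityMeasure μ] {X : Ω → ℝ}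
    (hX : AEMeasurable X μ) (hbd : ∀ᵐ ω ∂μ, X ω ∈ Set.Icc (0 : ℝ) 1) (t : ℝ) :
    mgf X μ t ≤ 1 - μ[X] + μ[X] * exp t := by
  have hint := integrable_of_ae_mem_Icc hX hbd
  have hexp := integrable_exp_mul_of_ae_mem_Icc hX hbd t
  have hI : Integrable (fun ω => 1 - X ω) μ := (integrable_const 1).sub hint
  calc mgf X μ t ≤ ∫ ω, (1 - X ω + X ω * exp t) ∂μ :=
        integral_mono_ae hexp (hI.add (hint.mul_const _))
          (by filter_upwards [hbd] with ω hω using exp_mul_le_one_sub_add_mul_exp hω t)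
    _ = 1 - μ[X] + μ[X] * exp t := by
        rw [integral_add hI (hint.mul_const _),
          integral_sub (integrable_const 1) hint, integral_mul_const]
        simp

lemma measure_sum_ge_eq_zero_of_integral_eq_zero {ι : Type*} [Fintype ι] {X : ι → Ω → ℝ}
    (hint : ∀ i, Integrable (X i) μ) (hnonneg : ∀ i, 0 ≤ᵐ[μ] X i) (hzero : ∀ i, μ[X i] = 0)
    {c : ℝ} (hc : 0 < c) : μ {ω | c ≤ ∑ i, X i ω} = 0 := by
  have hae : ∀ᵐ ω ∂μ, ∀ i, X i ω = 0 := ae_all_iff.2 fun i =>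
    (integral_eq_zero_iff_of_nonneg_ae (hnonneg i) (hint i)).1 (hzero i)
  refine measure_eq_zero_iff_ae_notMem.2 ?_
  filter_upwards [hae] with ω hω
  simpa [hω] using hc

lemma measure_sum_ge_le_pow_of_identDistrib [IsProbabilityMeasure μ] {ι : Type*} [Fintype ι]
    {X : ι → Ω → ℝ} (hmeas : ∀ i, Measurable (X i)) (hindep : iIndepFun X μ)
    (hident : ∀ i j, IdentDistrib (X i) (X j) μ μ) (j : ι) {t : ℝ} (ht : 0 ≤ t)
    (hint : Integrable (fun ω => exp (t * X j ω)) μ) (a : ℝ) :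
    μ.real {ω | Fintype.card ι * a ≤ ∑ i, X i ω}
      ≤ (exp (-t * a) * mgf (X j) μ t) ^ Fintype.card ι := by
  have hint_sum : Integrable (fun ω => exp (t * (∑ i, X i) ω)) μ :=
    hindep.integrable_exp_mul_sum hmeas fun i _ =>
      ((hident i j).comp (measurable_const_mul t).exp).integrable_iff.2 hint
  have hmgf := mgf_sum_of_identDistrib hmeas hindep (fun i _ k _ => hident i k)
    (Finset.mem_univ j) t
  have hchernoff := measure_ge_le_exp_mul_mgf (Fintype.card ι * a) ht hint_sum
  simp only [Finset.sum_apply, hmgf, Finset.card_univ] at hchernoff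
  refine hchernoff.trans_eq ?_
  rw [mul_pow, ← exp_nat_mul]
  ring_nf

theorem measure_sum_ge_le_pow_of_identDistrib_of_mem_Icc [IsProbabilityMeasure μ] {ι : Type*}
    [Fintype ι] {X : ι → Ω → ℝ} (hmeas : ∀ i, Measurable (X i)) (hindep : iIndepFun X μ)
    (hident : ∀ i j, IdentDistrib (X i) (X j) μ μ)
    (hbd : ∀ i, ∀ᵐ ω ∂μ, X i ω ∈ Set.Icc (0 : ℝ) 1) (j : ι) {a : ℝ} (hma : μ[X j] < a)
    (ha : a < 1) :
    μ.real {ω | Fintype.card ι * a ≤ ∑ i, X i ω}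
      ≤ ((μ[X j] / a) ^ a * ((1 - μ[X j]) / (1 - a)) ^ (1 - a)) ^ Fintype.card ι := by
  set m := μ[X j]
  have hm₀ : 0 ≤ m := integral_nonneg_of_ae (by filter_upwards [hbd j] with ω hω using hω.1)
  have hcard : 0 < Fintype.card ι := Fintype.card_pos_iff.2 ⟨j⟩
  rcases hm₀.eq_or_lt with hm₀ | hm₀
  · have hzero := measure_sum_ge_eq_zero_of_integral_eq_zero
      (fun i => integrable_of_ae_mem_Icc (hmeas i).aemeasurable (hbd i))
      (fun i => by filter_upwards [hbd i] with ω hω using hω.1)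
      (fun i => (hident i j).integral_eq.trans hm₀.symm)
      (mul_pos (Nat.cast_pos.2 hcard) (hm₀.trans_lt hma))
    rw [← hm₀, zero_div, zero_rpow (by linarith), zero_mul, zero_pow hcard.ne', measureReal_def,
      hzero, ENNReal.toReal_zero]
  · set R := a * (1 - m) / (m * (1 - a))
    have hR : 1 < R := by
      rw [one_lt_div (mul_pos hm₀ (by linarith))]
      nlinarith
    have hR₀ : 0 < R := one_pos.trans hR
    calc _ ≤ (exp (-log R * a) * mgf (X j) μ (log R)) ^ Fintype.card ι :=
          measure_sum_ge_le_pow_of_identDistrib hmeas hindep hident j (log_nonneg hR.le)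
            (integrable_exp_mul_of_ae_mem_Icc (hmeas j).aemeasurable (hbd j) _) a
      _ ≤ (exp (-log R * a) * (1 - m + m * exp (log R))) ^ Fintype.card ι := by
          gcongr
          · exact mul_nonneg (exp_pos _).le mgf_nonneg
          · exact mgf_le_one_sub_add_mul_exp (hmeas j).aemeasurable (hbd j) _
      _ = (R ^ (-a) * (1 - m + m * R)) ^ Fintype.card ι := by
          rw [exp_log hR₀, rpow_def_of_pos hR₀, neg_mul, mul_neg]
      _ = _ := by rw [rpow_neg_mul_one_sub_add_mul_eq hm₀ hma ha]

end

/-- Hoeffding's inequality in relative-entropy form for i.i.d. `[0,1]`-valued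
random variables. -/
theorem stmt7 {Ω : Type*} [MeasurableSpace Ω] (μ : Measure Ω) [IsProbabilityMeasure μ]
    (n : ℕ) (hn : 0 < n) (ξ : Fin n → Ω → ℝ) (hmeas : ∀ i, Measurable (ξ i))
    (hindep : iIndepFun ξ μ)
    (hident : ∀ i, Measure.map (ξ i) μ = Measure.map (ξ ⟨0, hn⟩) μ)
    (hbd : ∀ i ω, ξ i ω ∈ Set.Icc (0 : ℝ) 1)
    (m : ℝ) (hm : m = ∫ ω, ξ ⟨0, hn⟩ ω ∂μ)
    (ε : ℝ) (hε : 0 < ε) (hε' : ε < 1 - m) :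
    (μ {ω | m + ε ≤ (∑ i, ξ i ω) / n}).toReal
      ≤ ((m / (m + ε)) ^ (m + ε) * ((1 - m) / (1 - m - ε)) ^ (1 - m - ε)) ^ (n : ℕ) := by
  have hident' : ∀ i j, IdentDistrib (ξ i) (ξ j) μ μ := fun i j =>
    ⟨(hmeas i).aemeasurable, (hmeas j).aemeasurable, (hident i).trans (hident j).symm⟩
  have hset : {ω | m + ε ≤ (∑ i, ξ i ω) / n} = {ω | n * (m + ε) ≤ ∑ i, ξ i ω} :=
    Set.ext fun _ => by exact le_div_iff₀' (Nat.cast_pos (α := ℝ) |>.2 hn)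
  have hkl := measure_sum_ge_le_pow_of_identDistrib_of_mem_Icc hmeas hindep hident'
    (fun i => .of_forall (hbd i)) ⟨0, hn⟩ (a := m + ε) (by linarith) (by linarith)
  rw [← hm, Fintype.card_fin, ← sub_sub] at hkl
  rwa [hset, ← measureReal_def]
end
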